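/- Let (x_i) be a real sequence with x_i ≠ ξ for all i, satisfying x_{i+1} - ξ = (k_0 + δ_i)(x_i - ξ) where δ_i → 0, |k_0| < 1, and k_0 ≠ 1. Then the Aitken-transformed sequence x_i' = x_i - (x_{i+1} - x_i)^2/(x_{i+2} - 2x_{i+1} + x_i) satisfies (x_i' - ξ)/(x_i - ξ) → 0 as i → ∞. -/

import Mathlib

/-!
If `xᵢ₊₁ - ξ = qᵢ (xᵢ - ξ)` and `xᵢ₊₂ - ξ = rᵢ (xᵢ₊₁ - ξ)`, the Aitken error ratio is exactly
`qᵢ (rᵢ - qᵢ) / (rᵢ qᵢ - 2 qᵢ + 1)`. With `qᵢ = k₀ + δᵢ` and `rᵢ = k₀ + δᵢ₊₁` both tending to `k₀`,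
the numerator tends to `0` and the denominator to `(k₀ - 1)² ≠ 0`.
-/

open Filter Topology

theorem aitken_error_ratio_eq {K : Type*} [Field K] {x₀ x₁ x₂ ξ q r : K} (h₀ : x₀ ≠ ξ)
    (h₁ : x₁ - ξ = q * (x₀ - ξ)) (h₂ : x₂ - ξ = r * (x₁ - ξ))
    (hden : r * q - 2 * q + 1 ≠ 0) :
    ((x₀ - (x₁ - x₀) ^ 2 / (x₂ - 2 * x₁ + x₀)) - ξ) / (x₀ - ξ) =
      q * (r - q) / (r * q - 2 * q + 1) := by
  have he : x₀ - ξ ≠ 0 := sub_ne_zero.mpr h₀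
  have hΔ : x₁ - x₀ = (q - 1) * (x₀ - ξ) := by linear_combination h₁
  have hΔΔ : x₂ - 2 * x₁ + x₀ = (r * q - 2 * q + 1) * (x₀ - ξ) := by
    linear_combination h₂ + (r - 2) * h₁
  rw [hΔ, hΔΔ]
  generalize hd : r * q - 2 * q + 1 = d at hden ⊢
  field_simp
  linear_combination (ξ - x₀) * hd

section Limits

variable {α K : Type*} [NormedField K] {l : Filter α} {q r : α → K} {k : K}

theorem tendsto_aitken_denom (hq : Tendsto q l (𝓝 k)) (hr : Tendsto r l (𝓝 k)) :
    Tendsto (fun i => r i * q i - 2 * q i + 1) l (𝓝 ((k - 1) ^ 2)) := by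
  convert ((hr.mul hq).sub (hq.const_mul 2)).add_const 1 using 2
  ring

theorem tendsto_aitken_error_factor (hq : Tendsto q l (𝓝 k)) (hr : Tendsto r l (𝓝 k))
    (hk : k ≠ 1) :
    Tendsto (fun i => q i * (r i - q i) / (r i * q i - 2 * q i + 1)) l (𝓝 0) := by
  have hne : (k - 1) ^ 2 ≠ 0 := pow_ne_zero 2 (sub_ne_zero.mpr hk)
  have h := (hq.mul (hr.sub hq)).div (tendsto_aitken_denom hq hr) hne
  rwa [sub_self, mul_zero, zero_div] at h

end Limits

theorem aitken_accelerates_general (x : ℕ → ℝ) (ξ k₀ : ℝ) (δ : ℕ → ℝ)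
    (hx : ∀ i, x i ≠ ξ)
    (hrec : ∀ i, x (i + 1) - ξ = (k₀ + δ i) * (x i - ξ))
    (hδ : Tendsto δ atTop (𝓝 0)) (hk1 : k₀ ≠ 1) :
    Tendsto (fun i =>
      ((x i - (x (i + 1) - x i) ^ 2 / (x (i + 2) - 2 * x (i + 1) + x i)) - ξ) /
        (x i - ξ)) atTop (𝓝 0) := by
  have hq : Tendsto (fun i => k₀ + δ i) atTop (𝓝 k₀) := by
    simpa using hδ.const_add k₀
  have hr : Tendsto (fun i => k₀ + δ (i + 1)) atTop (𝓝 k₀) :=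
    hq.comp (tendsto_add_atTop_nat 1)
  have hne : (k₀ - 1) ^ 2 ≠ 0 := pow_ne_zero 2 (sub_ne_zero.mpr hk1)
  refine (tendsto_aitken_error_factor hq hr hk1).congr' ?_
  filter_upwards [(tendsto_aitken_denom hq hr).eventually_ne hne] with i hden
  exact (aitken_error_ratio_eq (hx i) (hrec i) (hrec (i + 1)) hden).symm

theorem aitken_accelerates (x : ℕ → ℝ) (ξ k₀ : ℝ) (δ : ℕ → ℝ)
    (hx : ∀ i, x i ≠ ξ)
    (hrec : ∀ i, x (i + 1) - ξ = (k₀ + δ i) * (x i - ξ))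
    (hδ : Tendsto δ atTop (𝓝 0)) (hk : |k₀| < 1) (hk1 : k₀ ≠ 1) :
    Tendsto (fun i =>
      ((x i - (x (i + 1) - x i) ^ 2 / (x (i + 2) - 2 * x (i + 1) + x i)) - ξ) /
        (x i - ξ)) atTop (𝓝 0) :=
  aitken_accelerates_general x ξ k₀ δ hx hrec hδ hk1
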